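/- If group a is u-disadvantaged, then every borrower from group a who receives a loan under the optimal unconstrained classifier also receives it (weakly more often) under an optimal u-WE classifier of the threshold form: for all x with P(x, a) > 0, c_unc*(x,a) ≤ c_WE*(x,a). -/

import Mathlib

/-- Probability of group {A = a}. -/
noncomputable def grpProb {X : Type*} [Fintype X] (P : X × Bool → ℝ) (a : Bool) : ℝ :=
  ∑ x : X, P (x, a)

/-- Group-a welfare of a classifier. -/
noncomputable def welfareG {X : Type*} [Fintype X]
    (P : X × Bool → ℝ) (ubar : X × Bool → ℝ) (c : X × Bool → ℝ) (a : Bool) : ℝ :=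
  (∑ x : X, P (x, a) * ubar (x, a) * c (x, a)) / grpProb P a

/-- Bank's revenue of a classifier. -/
noncomputable def revenue {X : Type*} [Fintype X]
    (P : X × Bool → ℝ) (r : X × Bool → ℝ) (c : X × Bool → ℝ) : ℝ :=
  ∑ z : X × Bool, P z * r z * c z

/-- Subgroup-optimal revenue R_a*(w). -/
noncomputable def RstarG {X : Type*} [Fintype X]
    (P : X × Bool → ℝ) (r ubar : X × Bool → ℝ) (a : Bool) (w : ℝ) : ℝ :=
  sSup {v : ℝ | ∃ c : X → ℝ, (∀ x, c x ∈ Set.Icc (0:ℝ) 1) ∧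
    (∑ x : X, (P (x, a) / grpProb P a) * ubar (x, a) * c x) = w ∧
    (∑ x : X, (P (x, a) / grpProb P a) * r (x, a) * c x) = v}

/-- Conditional expected utility E[u | A = a]. -/
noncomputable def condEu {X : Type*} [Fintype X]
    (P : X × Bool → ℝ) (ubar : X × Bool → ℝ) (a : Bool) : ℝ :=
  ∑ x : X, (P (x, a) / grpProb P a) * ubar (x, a)

/-- The optimal unconstrained (threshold) classifier: 1 iff r(x,a) > 0. -/
noncomputable def cUnc {X : Type*} (r : X × Bool → ℝ) : X × Bool → ℝ :=
  fun z => if 0 < r z then 1 else 0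

/-!
Where `r(x, a) > 0`, the threshold form leaves `c_WE*(x, a) < 1` only if `λ_a > 0`. Since the
unconstrained welfare level `W_unc(a)` maximises `R_a*`, the supergradient inequality at
`W_unc(a)` then forces `w* ≤ W_unc(a) < W_unc(!a)`. So raising `c_WE*` at `(x, a)` and
compensating by moving group `!a` towards `c_unc*` keeps welfare equal and strictly raises
revenue, contradicting optimality.
-/

open Finset Set

lemma apply_false_eq_apply_true_iff {α : Type*} (f : Bool → α) (a : Bool) :
    f false = f true ↔ f a = f (!a) := by
  cases a <;> simp [eq_comm]

section

variable {X : Type*} (r : X × Bool → ℝ)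

lemma cUnc_mem_Icc (z : X × Bool) : cUnc r z ∈ Icc (0 : ℝ) 1 := by
  unfold cUnc; split_ifs <;> norm_num

lemma mul_le_mul_cUnc {q c : ℝ} (hq : 0 ≤ q) (hc : c ∈ Icc (0 : ℝ) 1) (z : X × Bool) :
    q * r z * c ≤ q * r z * cUnc r z := by
  have h : r z * c ≤ r z * cUnc r z := by
    unfold cUnc
    split_ifs with hr
    · simpa using mul_le_of_le_one_right hr.le hc.2
    · simpa using mul_nonpos_of_nonpos_of_nonneg (not_lt.1 hr) hc.1
  simpa only [mul_assoc] using mul_le_mul_of_nonneg_left h hq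

end

section

variable {X : Type*} [Fintype X] {P : X × Bool → ℝ} (ubar r : X × Bool → ℝ)

lemma grpProb_nonneg (hP : ∀ z, 0 ≤ P z) (a : Bool) : 0 ≤ grpProb P a :=
  sum_nonneg fun x _ => hP (x, a)

lemma welfareG_eq_sum (c : X × Bool → ℝ) (a : Bool) :
    welfareG P ubar c a = ∑ x, P (x, a) / grpProb P a * ubar (x, a) * c (x, a) := by
  rw [welfareG, sum_div]
  exact sum_congr rfl fun x _ => by ring

lemma welfareG_nonneg (hP : ∀ z, 0 ≤ P z) (hu : ∀ z, 0 ≤ ubar z) {c : X × Bool → ℝ}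
    (hc : ∀ z, 0 ≤ c z) (a : Bool) : 0 ≤ welfareG P ubar c a :=
  div_nonneg (sum_nonneg fun _ _ => mul_nonneg (mul_nonneg (hP _) (hu _)) (hc _))
    (grpProb_nonneg hP a)

lemma welfareG_le_condEu (hP : ∀ z, 0 ≤ P z) (hu : ∀ z, 0 ≤ ubar z) {c : X × Bool → ℝ}
    (hc : ∀ z, c z ≤ 1) (a : Bool) : welfareG P ubar c a ≤ condEu P ubar a := by
  rw [welfareG_eq_sum, condEu]
  exact sum_le_sum fun x _ => mul_le_of_le_one_right
    (mul_nonneg (div_nonneg (hP _) (grpProb_nonneg hP a)) (hu _)) (hc _)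

lemma sum_mul_le_sum_mul_cUnc (hP : ∀ z, 0 ≤ P z) (a : Bool) {c : X → ℝ}
    (hc : ∀ x, c x ∈ Icc (0 : ℝ) 1) :
    ∑ x, P (x, a) / grpProb P a * r (x, a) * c x ≤
      ∑ x, P (x, a) / grpProb P a * r (x, a) * cUnc r (x, a) :=
  sum_le_sum fun x _ => mul_le_mul_cUnc r (div_nonneg (hP _) (grpProb_nonneg hP a)) (hc x) _

lemma RstarG_welfareG_le (hP : ∀ z, 0 ≤ P z) (a : Bool) {c : X × Bool → ℝ}
    (hc : ∀ z, c z ∈ Icc (0 : ℝ) 1) :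
    RstarG P r ubar a (welfareG P ubar c a) ≤ RstarG P r ubar a (welfareG P ubar (cUnc r) a) := by
  have hbound : ∀ w, ∀ v ∈ {v : ℝ | ∃ c : X → ℝ, (∀ x, c x ∈ Icc (0 : ℝ) 1) ∧
      (∑ x, P (x, a) / grpProb P a * ubar (x, a) * c x) = w ∧
      (∑ x, P (x, a) / grpProb P a * r (x, a) * c x) = v},
      v ≤ ∑ x, P (x, a) / grpProb P a * r (x, a) * cUnc r (x, a) := by
    rintro w _ ⟨c', hc', -, rfl⟩
    exact sum_mul_le_sum_mul_cUnc r hP a hc'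
  unfold RstarG
  refine (csSup_le ?_ (hbound _)).trans (le_csSup ⟨_, hbound _⟩ ?_)
  · exact ⟨_, fun x => c (x, a), fun x => hc (x, a), (welfareG_eq_sum ubar c a).symm, rfl⟩
  · exact ⟨fun x => cUnc r (x, a), fun x => cUnc_mem_Icc r (x, a),
      (welfareG_eq_sum ubar (cUnc r) a).symm, rfl⟩

lemma welfareG_le_welfareG_cUnc_of_supergradient (hP : ∀ z, 0 ≤ P z) (hu : ∀ z, 0 ≤ ubar z)
    (a : Bool) {c : X × Bool → ℝ} (hc : ∀ z, c z ∈ Icc (0 : ℝ) 1) {lam : ℝ} (hlam : 0 < lam)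
    (hsup : ∀ w' ∈ Icc (0 : ℝ) (condEu P ubar a),
      RstarG P r ubar a w' ≤
        RstarG P r ubar a (welfareG P ubar c a) + lam * (w' - welfareG P ubar c a)) :
    welfareG P ubar c a ≤ welfareG P ubar (cUnc r) a := by
  have hsup_unc := hsup (welfareG P ubar (cUnc r) a)
    ⟨welfareG_nonneg ubar hP hu (fun z => (cUnc_mem_Icc r z).1) a,
      welfareG_le_condEu ubar hP hu (fun z => (cUnc_mem_Icc r z).2) a⟩
  have hmax := RstarG_welfareG_le ubar r hP a hc
  exact sub_nonneg.1 (nonneg_of_mul_nonneg_right (by linarith) hlam)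

end

section Perturbation

variable {X : Type*} [DecidableEq X]

def shiftMix (c d : X × Bool → ℝ) (a : Bool) (x₀ : X) (s t : ℝ) : X × Bool → ℝ := fun z =>
  if z.2 = a then c z + (if z.1 = x₀ then s else 0) else (1 - t) * c z + t * d z

variable {c d : X × Bool → ℝ} {a : Bool} {x₀ : X} {s t : ℝ}

lemma shiftMix_mem_Icc (hc : ∀ z, c z ∈ Icc (0 : ℝ) 1) (hd : ∀ z, d z ∈ Icc (0 : ℝ) 1)
    (hs : 0 ≤ s) (hs₁ : c (x₀, a) + s ≤ 1) (ht : 0 ≤ t) (ht₁ : t ≤ 1) (z : X × Bool) :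
    shiftMix c d a x₀ s t z ∈ Icc (0 : ℝ) 1 := by
  obtain ⟨x, b⟩ := z
  obtain ⟨hc₀, hc₁⟩ := hc (x, b)
  obtain ⟨hd₀, hd₁⟩ := hd (x, b)
  unfold shiftMix
  split_ifs with hb hx
  · obtain ⟨rfl, rfl⟩ : x = x₀ ∧ b = a := ⟨hx, hb⟩
    exact ⟨by linarith, hs₁⟩
  · simpa using hc (x, b)
  · constructor <;> nlinarith

variable [Fintype X] {P : X × Bool → ℝ} (ubar r : X × Bool → ℝ)

lemma welfareG_shiftMix_self :
    welfareG P ubar (shiftMix c d a x₀ s t) a =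
      welfareG P ubar c a + P (x₀, a) * ubar (x₀, a) * s / grpProb P a := by
  simp only [welfareG, shiftMix, if_true, mul_add, sum_add_distrib, ← add_div]
  simp

lemma welfareG_shiftMix_not :
    welfareG P ubar (shiftMix c d a x₀ s t) (!a) =
      (1 - t) * welfareG P ubar c (!a) + t * welfareG P ubar d (!a) := by
  simp only [welfareG, shiftMix, Bool.not_ne_self, if_false, mul_div_assoc', ← add_div, mul_sum,
    ← sum_add_distrib]
  congr 1
  exact sum_congr rfl fun x _ => by ring

lemma revenue_lt_revenue_shiftMix (hP : ∀ z, 0 ≤ P z) (hc : ∀ z, c z ∈ Icc (0 : ℝ) 1)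
    (hPx : 0 < P (x₀, a)) (hr : 0 < r (x₀, a)) (hs : 0 < s) (ht : 0 ≤ t) :
    revenue P r c < revenue P r (shiftMix c (cUnc r) a x₀ s t) := by
  refine sum_lt_sum (fun z _ => ?_) ⟨(x₀, a), mem_univ _, ?_⟩
  · unfold shiftMix
    split_ifs with hb hx
    · obtain ⟨x, b⟩ := z
      obtain ⟨rfl, rfl⟩ : x = x₀ ∧ b = a := ⟨hx, hb⟩
      nlinarith [mul_pos hPx hr]
    · simp
    · have h := mul_le_mul_cUnc r (hP z) (hc z) z
      nlinarith
  · simp only [shiftMix, if_true]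
    nlinarith [mul_pos hPx hr]

end Perturbation

lemma exists_welfare_eq_revenue_gt {X : Type*} [Fintype X] {P : X × Bool → ℝ}
    (hP : ∀ z, 0 ≤ P z) (ubar r : X × Bool → ℝ) (hu : ∀ z, 0 ≤ ubar z) {c : X × Bool → ℝ}
    (hc : ∀ z, c z ∈ Icc (0 : ℝ) 1) {a : Bool} (hWE : welfareG P ubar c a = welfareG P ubar c (!a))
    (hlow : welfareG P ubar c a < welfareG P ubar (cUnc r) (!a)) {x₀ : X} (hPx : 0 < P (x₀, a))
    (hr : 0 < r (x₀, a)) (hc₁ : c (x₀, a) < 1) :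
    ∃ c' : X × Bool → ℝ, (∀ z, c' z ∈ Icc (0 : ℝ) 1) ∧
      welfareG P ubar c' a = welfareG P ubar c' (!a) ∧ revenue P r c < revenue P r c' := by
  classical
  set δ := 1 - c (x₀, a)
  set q := P (x₀, a) * ubar (x₀, a) / grpProb P a
  set D := welfareG P ubar (cUnc r) (!a) - welfareG P ubar c a
  have hδ : 0 < δ := by linarith
  have hq : 0 ≤ q := div_nonneg (mul_nonneg hPx.le (hu _)) (grpProb_nonneg hP a)
  have hD : 0 < D := by linarith
  have hden : 0 < D + δ * q := by positivity
  -- Chosen so that `s * q = t * D`, i.e. the two groups gain the same welfare.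
  set s := δ * D / (D + δ * q)
  set t := δ * q / (D + δ * q)
  have hs : 0 < s := by positivity
  have hsδ : s ≤ δ := by
    rw [div_le_iff₀ hden]
    nlinarith [mul_nonneg hδ.le (mul_nonneg hδ.le hq)]
  have ht : 0 ≤ t := by positivity
  have ht₁ : t ≤ 1 := by
    rw [div_le_one hden]
    linarith
  have hsq : s * q = t * D := by
    simp only [s, t]
    field_simp
  refine ⟨shiftMix c (cUnc r) a x₀ s t,
    shiftMix_mem_Icc hc (cUnc_mem_Icc r) hs.le (by linarith) ht ht₁, ?_,
    revenue_lt_revenue_shiftMix r hP hc hPx hr hs ht⟩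
  rw [welfareG_shiftMix_self, welfareG_shiftMix_not, ← hWE]
  linear_combination (mul_div_right_comm (P (x₀, a) * ubar (x₀, a)) s (grpProb P a)) + hsq

theorem stmt13_general {X : Type*} [Fintype X]
    (P : X × Bool → ℝ) (hP : ∀ z, 0 ≤ P z)
    (r ubar : X × Bool → ℝ) (hu : ∀ z, 0 ≤ ubar z)
    (cWE : X × Bool → ℝ) (hcWE : ∀ z, cWE z ∈ Set.Icc (0:ℝ) 1)
    (hWE : welfareG P ubar cWE false = welfareG P ubar cWE true)
    (hopt : ∀ c : X × Bool → ℝ, (∀ z, c z ∈ Set.Icc (0:ℝ) 1) →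
      welfareG P ubar c false = welfareG P ubar c true →
      revenue P r c ≤ revenue P r cWE)
    (a : Bool)
    (lam : ℝ)
    (hsup : ∀ w' ∈ Set.Icc (0:ℝ) (condEu P ubar a),
      RstarG P r ubar a w' ≤
        RstarG P r ubar a (welfareG P ubar cWE a) +
          lam * (w' - welfareG P ubar cWE a))
    (hthr : ∀ x : X,
      (lam * ubar (x, a) < r (x, a) → cWE (x, a) = 1) ∧
      (r (x, a) < lam * ubar (x, a) → cWE (x, a) = 0))
    (hdis : welfareG P ubar (cUnc r) a < welfareG P ubar (cUnc r) (!a)) :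
    ∀ x : X, 0 < P (x, a) → cUnc r (x, a) ≤ cWE (x, a) := by
  intro x hPx
  rcases le_or_gt (r (x, a)) 0 with hr | hr
  · simpa [cUnc, not_lt.2 hr] using (hcWE (x, a)).1
  rcases lt_or_ge (lam * ubar (x, a)) (r (x, a)) with hlt | hge
  · rw [(hthr x).1 hlt]
    exact (cUnc_mem_Icc r (x, a)).2
  have hlam : 0 < lam := pos_of_mul_pos_left (hr.trans_le hge) (hu (x, a))
  have hlow := welfareG_le_welfareG_cUnc_of_supergradient ubar r hP hu a hcWE hlam hsup
  rw [cUnc, if_pos hr]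
  by_contra! hc₁
  obtain ⟨c', hc', hc'WE, hrev⟩ := exists_welfare_eq_revenue_gt hP ubar r hu hcWE
    ((apply_false_eq_apply_true_iff _ a).1 hWE) (hlow.trans_lt hdis) hPx hr hc₁
  exact (hopt c' hc' ((apply_false_eq_apply_true_iff _ a).2 hc'WE)).not_gt hrev

/-- if group a is u-disadvantaged, then under an optimal u-WE classifier
of threshold form (with λ_a a supergradient of R_a* at the optimal welfare level),
every borrower from group a granted a loan by the unconstrained classifier keeps it:
c_unc*(x,a) ≤ c_WE*(x,a) for all x with P(x,a) > 0. -/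
theorem stmt13 {X : Type*} [Fintype X]
    (P : X × Bool → ℝ) (hP : ∀ z, 0 ≤ P z) (hPsum : ∑ z, P z = 1)
    (h0 : 0 < grpProb P false) (h1 : 0 < grpProb P true)
    (r ubar : X × Bool → ℝ) (hu : ∀ z, 0 ≤ ubar z)
    (cWE : X × Bool → ℝ) (hcWE : ∀ z, cWE z ∈ Set.Icc (0:ℝ) 1)
    (hWE : welfareG P ubar cWE false = welfareG P ubar cWE true)
    (hopt : ∀ c : X × Bool → ℝ, (∀ z, c z ∈ Set.Icc (0:ℝ) 1) →
      welfareG P ubar c false = welfareG P ubar c true →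
      revenue P r c ≤ revenue P r cWE)
    (a : Bool)
    (lam : ℝ)
    (hsup : ∀ w' ∈ Set.Icc (0:ℝ) (condEu P ubar a),
      RstarG P r ubar a w' ≤
        RstarG P r ubar a (welfareG P ubar cWE a) +
          lam * (w' - welfareG P ubar cWE a))
    (hthr : ∀ x : X,
      (lam * ubar (x, a) < r (x, a) → cWE (x, a) = 1) ∧
      (r (x, a) < lam * ubar (x, a) → cWE (x, a) = 0))
    (hdis : welfareG P ubar (cUnc r) a < welfareG P ubar (cUnc r) (!a)) :
    ∀ x : X, 0 < P (x, a) → cUnc r (x, a) ≤ cWE (x, a) :=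
  stmt13_general P hP r ubar hu cWE hcWE hWE hopt a lam hsup hthr hdis
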